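/- Assume that Ω^1_{R/K} is a free R-module with basis dx^1,…,dx^d, and for f ∈ R let ∂_{x^a}f ∈ R be the unique elements with df = Σ_a (∂_{x^a}f)·dx^a. Then for every f ∈ R and every c ∈ {1,…,d}, the identity ∂_{t^c} I(f) = Σ_{a=1}^d I(∂_{x^a}f) · ∂_{t^c} I(x^a) holds in R^𝐝[[t^1,…,t^d]]. Equivalently, for every multi-index k: (k(c)+1) · f_{k+e_c} = Σ_{a=1}^d Σ_{i+j=k} (∂_{x^a}f)_i · (j(c)+1) · (x^a)_{j+e_c}, where g_0 := g for g ∈ R. -/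

import Mathlib

namespace Paper

/-- Multi-indices: finitely supported functions `Fin d → ℕ`. -/
abbrev MIdx (d : ℕ) := Fin d →₀ ℕ

/-- The length `|i|` of a multi-index. -/
def deg {d : ℕ} (i : MIdx d) : ℕ := i.sum fun _ n => n

variable (K R : Type) [Field K] [CharZero K] [CommRing R] [Algebra K R]

/-- The defining relations of the algebra `R^𝐝`. -/
def relSet (d : ℕ) : Set (MvPolynomial (R × MIdx d) R) :=
  {p | (∃ f g : R, ∃ i : MIdx d,
          p = MvPolynomial.X (f + g, i) - MvPolynomial.X (f, i) - MvPolynomial.X (g, i)) ∨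
       (∃ f g : R, ∃ i : MIdx d,
          p = MvPolynomial.X (f * g, i) -
            ∑ q ∈ Finset.HasAntidiagonal.antidiagonal i, MvPolynomial.X (f, q.1) * MvPolynomial.X (g, q.2)) ∨
       (∃ f : R, p = MvPolynomial.X (f, (0 : MIdx d)) - MvPolynomial.C f) ∨
       (∃ (c : K) (i : MIdx d), 1 ≤ deg i ∧ p = MvPolynomial.X (algebraMap K R c, i))}

/-- The commutative `R`-algebra `R^𝐝` generated by the symbols `f_i`. -/
def Rd (d : ℕ) : Type :=
  MvPolynomial (R × MIdx d) R ⧸ Ideal.span (relSet K R d)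

noncomputable instance (d : ℕ) : CommRing (Rd K R d) := Ideal.Quotient.commRing _
noncomputable instance (d : ℕ) : Algebra R (Rd K R d) := Ideal.Quotient.algebra R
noncomputable instance (d : ℕ) : Algebra K (Rd K R d) := Ideal.Quotient.algebra K

/-- The generator `f_i` of `R^𝐝`. -/
noncomputable def gen {d : ℕ} (f : R) (i : MIdx d) : Rd K R d :=
  Ideal.Quotient.mk (Ideal.span (relSet K R d)) (MvPolynomial.X (f, i))

/-- The Taylor series `I(f) = Σ_i f_i t^i ∈ R^𝐝[[t^1,…,t^d]]`. -/
noncomputable def Ifun {d : ℕ} (f : R) : MvPowerSeries (Fin d) (Rd K R d) :=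
  fun i => gen K R f i

end Paper

namespace Paper

/-- The formal partial derivative `∂_{t^c}` on multivariate power series,
defined coefficientwise: the coefficient of `t^k` in `∂_{t^c} F` is `(k(c)+1)`
times the coefficient of `t^{k+e_c}` in `F`. -/
noncomputable def ptderiv {A : Type} [CommRing A] {d : ℕ} (c : Fin d)
    (F : MvPowerSeries (Fin d) A) : MvPowerSeries (Fin d) A :=
  fun k => (k c + 1 : ℕ) • MvPowerSeries.coeff (R := A) (k + Finsupp.single c 1) F

end Paper

/-!
The map `f ↦ ∂_{t^c} I(f)` is the composite of the `K`-algebra homomorphism `I` with the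
derivation `∂_{t^c}`, hence a `K`-derivation of `R` into `R^𝐝[[t]]`, viewed as an `R`-module through `I`.
By the universal property of `Ω¹_{R/K}` it factors through `d`, so the expansion
`df = Σ_a (∂_{x^a} f) dx^a` is carried to the claimed chain rule.
-/

theorem Derivation.apply_eq_sum_smul_of_D_eq_sum {K R M ι : Type*} [CommRing K] [CommRing R]
    [Algebra K R] [AddCommGroup M] [Module R M] [Module K M] [IsScalarTower K R M] [Fintype ι]
    (D : Derivation K R M) (x : ι → R) (pd : ι → R → R)
    (hpd : ∀ g : R, KaehlerDifferential.D K R g =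
      ∑ a, pd a g • KaehlerDifferential.D K R (x a)) (f : R) :
    D f = ∑ a, pd a f • D (x a) := by
  rw [← D.liftKaehlerDifferential_comp_D, hpd f, map_sum]
  simp only [LinearMap.map_smul, Derivation.liftKaehlerDifferential_comp_D]

theorem Derivation.apply_algHom_eq_sum_mul {K R S ι : Type*} [CommRing K] [CommRing R]
    [CommRing S] [Algebra K R] [Algebra K S] [Fintype ι]
    (φ : R →ₐ[K] S) (δ : Derivation K S S) (x : ι → R) (pd : ι → R → R)
    (hpd : ∀ g : R, KaehlerDifferential.D K R g =
      ∑ a, pd a g • KaehlerDifferential.D K R (x a)) (f : R) :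
    δ (φ f) = ∑ a, φ (pd a f) * δ (φ (x a)) := by
  let : Algebra R S := φ.toRingHom.toAlgebra
  have : IsScalarTower K R S := IsScalarTower.of_algebraMap_eq' φ.comp_algebraMap.symm
  exact (δ.compAlgebraMap R).apply_eq_sum_smul_of_D_eq_sum x pd hpd f

namespace Paper

theorem ptderiv_eq_pderiv {A : Type} [CommRing A] {d : ℕ} (c : Fin d)
    (F : MvPowerSeries (Fin d) A) : ptderiv c F = MvPowerSeries.pderiv A c F := by
  ext k
  rw [MvPowerSeries.coeff_pderiv]
  change ((k c + 1 : ℕ) • MvPowerSeries.coeff (k + Finsupp.single c 1) F : A) = _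
  rw [nsmul_eq_mul, mul_comm]
  push_cast
  rfl

section Relations

variable (K R : Type) [Field K] [CommRing R] [Algebra K R] {d : ℕ}

theorem mk_eq_zero_of_mem_relSet {p : MvPolynomial (R × MIdx d) R} (hp : p ∈ relSet K R d) :
    Ideal.Quotient.mk (Ideal.span (relSet K R d)) p = 0 :=
  Ideal.Quotient.eq_zero_iff_mem.2 (Ideal.subset_span hp)

theorem gen_add (f g : R) (i : MIdx d) :
    gen K R (f + g) i = gen K R f i + gen K R g i := by
  have h := mk_eq_zero_of_mem_relSet K R (Or.inl ⟨f, g, i, rfl⟩)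
  rwa [map_sub, map_sub, sub_sub, sub_eq_zero] at h

theorem gen_mul (f g : R) (i : MIdx d) :
    gen K R (f * g) i =
      ∑ q ∈ Finset.HasAntidiagonal.antidiagonal i, gen K R f q.1 * gen K R g q.2 := by
  have h := mk_eq_zero_of_mem_relSet K R (Or.inr (Or.inl ⟨f, g, i, rfl⟩))
  rw [map_sub, map_sum, sub_eq_zero] at h
  simp only [map_mul] at h
  exact h

theorem gen_zero_idx (f : R) : gen K R f (0 : MIdx d) = algebraMap R (Rd K R d) f := by
  have h := mk_eq_zero_of_mem_relSet K R (d := d) (Or.inr (Or.inr (Or.inl ⟨f, rfl⟩)))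
  rwa [map_sub, sub_eq_zero] at h

theorem gen_algebraMap_of_ne_zero (c : K) {i : MIdx d} (hi : i ≠ 0) :
    gen K R (algebraMap K R c) i = 0 := by
  have hdeg : 1 ≤ deg i := Nat.one_le_iff_ne_zero.2 ((Finsupp.degree_eq_zero_iff i).not.2 hi)
  exact mk_eq_zero_of_mem_relSet K R (Or.inr (Or.inr (Or.inr ⟨c, i, hdeg, rfl⟩)))

theorem Ifun_algebraMap (c : K) :
    Ifun K R (d := d) (algebraMap K R c) = algebraMap K (MvPowerSeries (Fin d) (Rd K R d)) c := by
  ext k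
  rw [MvPowerSeries.algebraMap_apply, MvPowerSeries.coeff_C]
  split_ifs with hk
  · subst hk
    exact gen_zero_idx K R _
  · exact gen_algebraMap_of_ne_zero K R c hk

noncomputable def Ihom (d : ℕ) : R →ₐ[K] MvPowerSeries (Fin d) (Rd K R d) where
  toFun := Ifun K R
  map_one' := by simpa using Ifun_algebraMap K R (d := d) 1
  map_mul' f g := by
    ext k
    exact (gen_mul K R f g k).trans (MvPowerSeries.coeff_mul k (Ifun K R f) (Ifun K R g)).symm
  map_zero' := by simpa using Ifun_algebraMap K R (d := d) 0
  map_add' f g := by ext k; exact gen_add K R f g k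
  commutes' := Ifun_algebraMap K R

theorem Ihom_apply (f : R) : Ihom K R d f = Ifun K R f := rfl

end Relations

end Paper

theorem statement10_general (K R : Type) [Field K] [CommRing R] [Algebra K R]
    (d : ℕ) (x : Fin d → R)
    (pd : Fin d → R → R)
    (hpd : ∀ g : R, KaehlerDifferential.D K R g =
      ∑ a : Fin d, pd a g • KaehlerDifferential.D K R (x a)) :
    ∀ (f : R) (c : Fin d),
      Paper.ptderiv c (Paper.Ifun K R (d := d) f) =
        ∑ a : Fin d,
          Paper.Ifun K R (pd a f) * Paper.ptderiv c (Paper.Ifun K R (x a)) := by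
  intro f c
  simp only [Paper.ptderiv_eq_pderiv, ← Paper.Ihom_apply K R]
  exact ((MvPowerSeries.pderiv _ c).restrictScalars K).apply_algHom_eq_sum_mul
    (Paper.Ihom K R d) x pd hpd f

/-- The chain rule in `R^𝐝[[t]]`:
`∂_{t^c} I(f) = Σ_a I(∂_{x^a} f) · ∂_{t^c} I(x^a)`. -/
theorem statement10 (K R : Type) [Field K] [CharZero K] [CommRing R] [Algebra K R]
    (d : ℕ) (hd : 1 ≤ d) (x : Fin d → R)
    (b : Module.Basis (Fin d) R (KaehlerDifferential K R))
    (hb : ∀ a : Fin d, b a = KaehlerDifferential.D K R (x a))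
    (pd : Fin d → R → R)
    (hpd : ∀ g : R, KaehlerDifferential.D K R g =
      ∑ a : Fin d, pd a g • KaehlerDifferential.D K R (x a)) :
    ∀ (f : R) (c : Fin d),
      Paper.ptderiv c (Paper.Ifun K R (d := d) f) =
        ∑ a : Fin d,
          Paper.Ifun K R (pd a f) * Paper.ptderiv c (Paper.Ifun K R (x a)) :=
  statement10_general K R d x pd hpd
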